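/- arXiv:2402.09477 — 3 statements merged into one kernel-verified Lean document; each statement's English description precedes it below -/
import Mathlib

section
/- Let W and W' be integer-valued random variables with W stochastically dominated by W' (i.e., P[W ≥ v] ≤ P[W' ≥ v] for all v). Let B ∈ {0,1} be a random variable such that conditioned on W, P[B = 1 | W] ≤ p, and let B' ~ Bernoulli(p) be independent of W'. Then W + B is stochastically dominated by W' + B'. -/
open scoped ENNReal

private lemma shiftA (f : ℤ → ℝ≥0∞) (v : ℤ) :
    (∑' w : ℤ, if v - 1 ≤ w then f w else 0)
      = f (v - 1) + ∑' w : ℤ, if v ≤ w then f w else 0 := by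
  rw [ENNReal.tsum_eq_add_tsum_ite (v - 1)]
  congr 1
  · simp
  · apply tsum_congr; intro w
    split_ifs <;> first | rfl | omega | (exfalso; omega)

/-- Induction step (Lemma 4.9 of Steinke et al. 2023): if `W` is stochastically
dominated by `W'`, `B ∈ {0,1}` satisfies `P[B=1 | W] ≤ p`, and `B' ~ Bernoulli(p)`
is independent of `W'`, then `W + B` is stochastically dominated by `W' + B'`.
Here `μ` is the joint law of `(W, B)` and `ν` the law of `W'`. -/
theorem stmt_5 (p : ℝ≥0∞) (hp : p ≤ 1)
    (μ : PMF (ℤ × Bool)) (ν : PMF ℤ)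
    (hdom : ∀ v : ℤ, (∑' w : ℤ, if v ≤ w then μ (w, true) + μ (w, false) else 0)
      ≤ ∑' w : ℤ, if v ≤ w then ν w else 0)
    (hcond : ∀ w : ℤ, μ (w, true) ≤ p * (μ (w, true) + μ (w, false))) :
    ∀ v : ℤ,
      (∑' w : ℤ, ((if v ≤ w + 1 then μ (w, true) else 0)
          + (if v ≤ w then μ (w, false) else 0)))
        ≤ ∑' w : ℤ, ν w * ((if v ≤ w + 1 then p else 0) + (if v ≤ w then 1 - p else 0)) := by
  intro v
  set F : ℤ → ℝ≥0∞ := fun u => ∑' w : ℤ, if u ≤ w then μ (w, true) + μ (w, false) else 0 with hF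
  set G : ℤ → ℝ≥0∞ := fun u => ∑' w : ℤ, if u ≤ w then ν w else 0 with hG
  -- LHS rewrite
  have hL : (∑' w : ℤ, ((if v ≤ w + 1 then μ (w, true) else 0)
      + (if v ≤ w then μ (w, false) else 0))) = μ (v - 1, true) + F v := by
    rw [ENNReal.tsum_add]
    have e1 : (∑' w : ℤ, if v ≤ w + 1 then μ (w, true) else 0)
        = ∑' w : ℤ, if v - 1 ≤ w then μ (w, true) else 0 := by
      apply tsum_congr; intro w; exact if_congr (by omega) rfl rfl
    rw [e1, shiftA]
    have e2 : F v = (∑' w : ℤ, if v ≤ w then μ (w, true) else 0)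
        + ∑' w : ℤ, if v ≤ w then μ (w, false) else 0 := by
      rw [hF, ← ENNReal.tsum_add]
      apply tsum_congr; intro w; split_ifs <;> simp
    rw [e2]; ring
  have hR : (∑' w : ℤ, ν w * ((if v ≤ w + 1 then p else 0) + (if v ≤ w then 1 - p else 0)))
      = G v * (1 - p) + (ν (v - 1) + G v) * p := by
    have e1 : ∀ w : ℤ, ν w * ((if v ≤ w + 1 then p else 0) + (if v ≤ w then 1 - p else 0))
        = (if v - 1 ≤ w then ν w else 0) * p + (if v ≤ w then ν w else 0) * (1 - p) := by
      intro w
      rw [mul_add, show (if v ≤ w + 1 then p else 0) = (if v - 1 ≤ w then p else 0) from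
        if_congr (by omega) rfl rfl]
      congr 1 <;> split_ifs <;> simp [mul_comm]
    rw [tsum_congr e1, ENNReal.tsum_add, ENNReal.tsum_mul_right, ENNReal.tsum_mul_right,
      shiftA]
    ring
  rw [hL, hR]
  have key1 : (μ (v - 1, true) + μ (v - 1, false)) + F v ≤ ν (v - 1) + G v := by
    have := hdom (v - 1)
    rwa [show (∑' w : ℤ, if v - 1 ≤ w then μ (w, true) + μ (w, false) else 0)
        = (μ (v - 1, true) + μ (v - 1, false)) + F v from shiftA _ v,
      show (∑' w : ℤ, if v - 1 ≤ w then ν w else 0) = ν (v - 1) + G v from shiftA _ v] at this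
  have hFsplit : F v = F v * (1 - p) + F v * p := by
    rw [← mul_add, tsub_add_cancel_of_le hp, mul_one]
  calc μ (v - 1, true) + F v
      ≤ p * (μ (v - 1, true) + μ (v - 1, false)) + F v := add_le_add_left (hcond _) _
    _ = F v * (1 - p) + ((μ (v - 1, true) + μ (v - 1, false)) + F v) * p := by
        nth_rewrite 1 [hFsplit]; ring
    _ ≤ G v * (1 - p) + (ν (v - 1) + G v) * p :=
        add_le_add (mul_le_mul_left (hdom v) _) (mul_le_mul_left key1 _)
end

section
/- Let D and G be probability distributions on a finite set X such that G is (c,γ)-close to D, i.e., D(S) ≤ e^c·G(S) + γ for all S ⊆ X. Define D'(x) = min{D(x), e^c·G(x)}/(1−γ') and D''(x) = max{0, D(x) − e^c·G(x)}/γ', where γ' = ∑_x max{0, D(x) − e^c·G(x)}. Then γ' ∈ [0, γ], D = (1−γ')·D' + γ'·D'', and e^{-c}·D'(x) ≤ G(x)/(1−γ') for all x. -/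
open Finset

-- Test the hypothesis on the set where `f ≥ g`.
theorem sum_max_zero_sub_le_of_forall_finset {X : Type*} [Fintype X] (f g : X → ℝ) (γ : ℝ)
    (h : ∀ S : Finset X, ∑ x ∈ S, f x ≤ ∑ x ∈ S, g x + γ) :
    ∑ x, max 0 (f x - g x) ≤ γ := by
  classical
  have hexcess : ∑ x, max 0 (f x - g x) = ∑ x with g x ≤ f x, (f x - g x) := by
    simp only [sum_filter, max_def, sub_nonneg]
  have hS := h (univ.filter fun x => g x ≤ f x)
  rw [hexcess, sum_sub_distrib]
  linarith

theorem min_add_max_zero_sub {α : Type*} [AddCommGroup α] [LinearOrder α] [IsOrderedAddMonoid α]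
    (a b : α) : min a b + max 0 (a - b) = a := by
  rcases le_total a b with hab | hab
  · rw [min_eq_left hab, max_eq_left (sub_nonpos.mpr hab), add_zero]
  · rw [min_eq_right hab, max_eq_right (sub_nonneg.mpr hab), add_sub_cancel]

theorem eq_mul_min_div_add_mul_max_zero_sub_div {K : Type*} [Field K] [LinearOrder K]
    [IsStrictOrderedRing K] (a b t : K) (ht₀ : t ≠ 0) (ht₁ : 1 - t ≠ 0) :
    a = (1 - t) * (min a b / (1 - t)) + t * (max 0 (a - b) / t) := by
  rw [mul_div_cancel₀ _ ht₁, mul_div_cancel₀ _ ht₀, min_add_max_zero_sub]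

theorem exp_neg_mul_min_exp_mul_le (a b c : ℝ) :
    Real.exp (-c) * min a (Real.exp c * b) ≤ b :=
  calc Real.exp (-c) * min a (Real.exp c * b)
      ≤ Real.exp (-c) * (Real.exp c * b) := by gcongr; exact min_le_right _ _
    _ = b := by rw [← mul_assoc, ← Real.exp_add, neg_add_cancel, Real.exp_zero, one_mul]

theorem stmt_12_general {X : Type*} [Fintype X] (c γ : ℝ)
    (D G : X → ℝ)
    (hclose : ∀ S : Finset X, ∑ x ∈ S, D x ≤ Real.exp c * ∑ x ∈ S, G x + γ)
    (hγ'pos : 0 < ∑ x, max 0 (D x - Real.exp c * G x))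
    (hγ'lt : ∑ x, max 0 (D x - Real.exp c * G x) < 1) :
    (0 ≤ ∑ x, max 0 (D x - Real.exp c * G x) ∧
      ∑ x, max 0 (D x - Real.exp c * G x) ≤ γ) ∧
    (∀ x, D x =
      (1 - ∑ y, max 0 (D y - Real.exp c * G y)) *
        (min (D x) (Real.exp c * G x) / (1 - ∑ y, max 0 (D y - Real.exp c * G y))) +
      (∑ y, max 0 (D y - Real.exp c * G y)) *
        (max 0 (D x - Real.exp c * G x) / (∑ y, max 0 (D y - Real.exp c * G y)))) ∧
    (∀ x, Real.exp (-c) *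
        (min (D x) (Real.exp c * G x) / (1 - ∑ y, max 0 (D y - Real.exp c * G y)))
        ≤ G x / (1 - ∑ y, max 0 (D y - Real.exp c * G y))) := by
  have hcompl : 0 < 1 - ∑ x, max 0 (D x - Real.exp c * G x) := sub_pos.mpr hγ'lt
  refine ⟨⟨hγ'pos.le, ?_⟩, fun x ↦ ?_, fun x ↦ ?_⟩
  · refine sum_max_zero_sub_le_of_forall_finset D (fun x ↦ Real.exp c * G x) γ fun S ↦ ?_
    simpa only [mul_sum] using hclose S
  · exact eq_mul_min_div_add_mul_max_zero_sub_div _ _ _ hγ'pos.ne' hcompl.ne'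
  · rw [mul_div_assoc']
    exact div_le_div_of_nonneg_right (exp_neg_mul_min_exp_mul_le _ _ _) hcompl.le

/-- Decomposition lemma for a (c,γ)-close generator: with
`γ' = ∑_x max 0 (D x − e^c·G x)` (assumed in `(0,1)`), we have `γ' ∈ [0, γ]`,
`D = (1−γ')·D' + γ'·D''` where `D' x = min (D x) (e^c·G x) / (1−γ')` and
`D'' x = max 0 (D x − e^c·G x) / γ'`, and `e^{-c}·D' x ≤ G x / (1−γ')`. -/
theorem stmt_12 {X : Type*} [Fintype X] (c γ : ℝ) (hc : 0 ≤ c) (hγ : 0 ≤ γ)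
    (D G : X → ℝ) (hD0 : ∀ x, 0 ≤ D x) (hG0 : ∀ x, 0 ≤ G x)
    (hD1 : ∑ x, D x = 1) (hG1 : ∑ x, G x = 1)
    (hclose : ∀ S : Finset X, ∑ x ∈ S, D x ≤ Real.exp c * ∑ x ∈ S, G x + γ)
    (hγ'pos : 0 < ∑ x, max 0 (D x - Real.exp c * G x))
    (hγ'lt : ∑ x, max 0 (D x - Real.exp c * G x) < 1) :
    (0 ≤ ∑ x, max 0 (D x - Real.exp c * G x) ∧
      ∑ x, max 0 (D x - Real.exp c * G x) ≤ γ) ∧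
    (∀ x, D x =
      (1 - ∑ y, max 0 (D y - Real.exp c * G y)) *
        (min (D x) (Real.exp c * G x) / (1 - ∑ y, max 0 (D y - Real.exp c * G y))) +
      (∑ y, max 0 (D y - Real.exp c * G y)) *
        (max 0 (D x - Real.exp c * G x) / (∑ y, max 0 (D y - Real.exp c * G y)))) ∧
    (∀ x, Real.exp (-c) *
        (min (D x) (Real.exp c * G x) / (1 - ∑ y, max 0 (D y - Real.exp c * G y)))
        ≤ G x / (1 - ∑ y, max 0 (D y - Real.exp c * G y))) :=
  stmt_12_general c γ D G hclose hγ'pos hγ'lt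
end

section
/- Let D and G be probability distributions on a finite set Y with e^{-c}·(D(S) − γ) ≤ G(S) for all S ⊆ Y, where c, γ ≥ 0. Suppose X ~ Bernoulli(1/2), and Y' ~ D if X=1, Y' ~ G if X=0. Then there exists a randomized function E: Y → {0,1} such that (i) P[X=1, E(Y')=1 | Y'=y] ≤ e^c/(1+e^c) for all y with D(y)+G(y)>0, (ii) E_{Y~D}[E(Y)] ≥ 1−γ, and (iii) E_{Y~G}[E(Y)] ≥ 1−γ. -/
/-!
Accept `y` with probability `e y = min 1 (e^c G(y) / D(y))`. Then `D(y) e(y) ≤ e^c G(y)` and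
`D(y) e(y) ≤ D(y)`, which is exactly the bound `e^c / (1 + e^c)` on the posterior. The mass of `D`
that is rejected is `∑ (D(y) - e^c G(y))⁺`, the closeness hypothesis applied to the set
`{D > e^c G}`, so it is at most `γ`; since `e^c ≥ 1` the rejected mass of `G` is no larger.
-/

open Finset

section Detector

variable {Y : Type*} (E : ℝ) (D G : Y → ℝ)

/-- Defined by cases rather than as `min 1 (E * G y / D y)`, which would be `0` where `D y = 0`. -/
noncomputable def detector (y : Y) : ℝ :=
  if E * G y < D y then E * G y / D y else 1

variable {E D G}

lemma detector_nonneg (hE : 0 ≤ E) (hG : ∀ y, 0 ≤ G y) (y : Y) : 0 ≤ detector E D G y := by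
  unfold detector
  split_ifs with h
  · exact div_nonneg (mul_nonneg hE (hG y)) ((mul_nonneg hE (hG y)).trans h.le)
  · exact zero_le_one

lemma detector_le_one (hE : 0 ≤ E) (hG : ∀ y, 0 ≤ G y) (y : Y) : detector E D G y ≤ 1 := by
  unfold detector
  split_ifs with h
  · exact (div_le_one ((mul_nonneg hE (hG y)).trans_lt h)).mpr h.le
  · exact le_rfl

lemma mul_detector_eq (hE : 0 ≤ E) (hG : ∀ y, 0 ≤ G y) (y : Y) :
    D y * detector E D G y = D y - max (D y - E * G y) 0 := by
  unfold detector
  split_ifs with h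
  · have hD : D y ≠ 0 := ((mul_nonneg hE (hG y)).trans_lt h).ne'
    rw [mul_div_cancel₀ _ hD, max_eq_left (by linarith)]
    ring
  · rw [max_eq_right (by linarith)]
    ring

lemma mul_detector_le (hE : 0 ≤ E) (hG : ∀ y, 0 ≤ G y) (y : Y) :
    D y * detector E D G y ≤ E * G y := by
  rw [mul_detector_eq hE hG]
  linarith [le_max_left (D y - E * G y) 0]

lemma sub_le_mul_detector (hE : 1 ≤ E) (hG : ∀ y, 0 ≤ G y) (y : Y) :
    G y - max (D y - E * G y) 0 ≤ G y * detector E D G y := by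
  unfold detector
  split_ifs with h
  · have hGE : G y ≤ E * G y := le_mul_of_one_le_left (hG y) hE
    have hD : 0 < D y := (hG y).trans_lt (hGE.trans_lt h)
    rw [max_eq_left (by linarith), ← mul_div_assoc, le_div_iff₀ hD]
    -- the gap is `(D - G) (D - E G) ≥ 0`
    nlinarith [mul_nonneg (sub_nonneg.mpr (hGE.trans h.le)) (sub_nonneg.mpr h.le)]
  · linarith [le_max_right (D y - E * G y) 0]

end Detector

lemma sum_max_sub_mul_le {Y : Type*} [Fintype Y] {E γ : ℝ} {D G : Y → ℝ} (hE : 0 < E)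
    (hclose : ∀ S : Finset Y, E⁻¹ * ((∑ y ∈ S, D y) - γ) ≤ ∑ y ∈ S, G y) :
    ∑ y, max (D y - E * G y) 0 ≤ γ := by
  classical
  have hS := hclose ({y | E * G y < D y} : Finset Y)
  rw [inv_mul_le_iff₀ hE] at hS
  calc ∑ y, max (D y - E * G y) 0
      = ∑ y ∈ ({y | E * G y < D y} : Finset Y), (D y - E * G y) := by
        rw [sum_filter]
        refine sum_congr rfl fun y _ => ?_
        split_ifs with h
        · exact max_eq_left (by linarith)
        · exact max_eq_right (by linarith)
    _ ≤ γ := by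
        rw [sum_sub_distrib, ← mul_sum]
        linarith

lemma one_sub_le_sum_mul {Y : Type*} [Fintype Y] {γ : ℝ} {P f e : Y → ℝ}
    (hP : ∑ y, P y = 1) (hf : ∑ y, f y ≤ γ) (hle : ∀ y, P y - f y ≤ P y * e y) :
    1 - γ ≤ ∑ y, P y * e y :=
  calc 1 - γ ≤ ∑ y, (P y - f y) := by rw [sum_sub_distrib, hP]; linarith
    _ ≤ ∑ y, P y * e y := sum_le_sum fun y _ => hle y

lemma div_add_le_div_one_add {x a b E : ℝ} (hxa : x ≤ a) (hxb : x ≤ E * b) (hE : 0 ≤ E)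
    (hab : 0 < a + b) : x / (a + b) ≤ E / (1 + E) := by
  rw [div_le_div_iff₀ hab (by linarith)]
  nlinarith [mul_le_mul_of_nonneg_left hxa hE]

theorem stmt_14_general {Y : Type*} [Fintype Y] (c γ : ℝ) (hc : 0 ≤ c)
    (D G : Y → ℝ) (hD0 : ∀ y, 0 ≤ D y) (hG0 : ∀ y, 0 ≤ G y)
    (hD1 : ∑ y, D y = 1) (hG1 : ∑ y, G y = 1)
    (hclose : ∀ S : Finset Y, Real.exp (-c) * ((∑ y ∈ S, D y) - γ) ≤ ∑ y ∈ S, G y) :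
    ∃ e : Y → ℝ, (∀ y, 0 ≤ e y ∧ e y ≤ 1) ∧
      (∀ y, 0 < D y + G y →
        (1 / 2 * D y * e y) / (1 / 2 * D y + 1 / 2 * G y)
          ≤ Real.exp c / (1 + Real.exp c)) ∧
      1 - γ ≤ ∑ y, D y * e y ∧ 1 - γ ≤ ∑ y, G y * e y := by
  have hE : 0 ≤ Real.exp c := (Real.exp_pos c).le
  have hrejected : ∑ y, max (D y - Real.exp c * G y) 0 ≤ γ := by
    refine sum_max_sub_mul_le (Real.exp_pos c) fun S => ?_
    simpa only [Real.exp_neg] using hclose S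
  refine ⟨detector (Real.exp c) D G, fun y => ⟨detector_nonneg hE hG0 y, detector_le_one hE hG0 y⟩,
    fun y hy => ?_, ?_, ?_⟩
  · rw [mul_assoc, ← mul_add, mul_div_mul_left _ _ (by norm_num)]
    refine div_add_le_div_one_add ?_ (mul_detector_le hE hG0 y) hE hy
    exact mul_le_of_le_one_right (hD0 y) (detector_le_one hE hG0 y)
  · exact one_sub_le_sum_mul hD1 hrejected fun y => (mul_detector_eq hE hG0 y).ge
  · exact one_sub_le_sum_mul hG1 hrejected (sub_le_mul_detector (Real.one_le_exp hc) hG0)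

/-- Bayesian decomposition lemma (pure case): if `G` is `(c,γ)`-close to `D`
(set-wise `e^{-c}·(D(S) − γ) ≤ G(S)`), then there is a randomized detector
`E : Y → {0,1}` (given by its acceptance probability `e`) such that for every `y`,
`P[X=1, E(Y')=1 | Y'=y] ≤ e^c/(1+e^c)` and `E[E] ≥ 1−γ` under both `D` and `G`. -/
theorem stmt_14 {Y : Type*} [Fintype Y] (c γ : ℝ) (hc : 0 ≤ c) (hγ : 0 ≤ γ)
    (D G : Y → ℝ) (hD0 : ∀ y, 0 ≤ D y) (hG0 : ∀ y, 0 ≤ G y)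
    (hD1 : ∑ y, D y = 1) (hG1 : ∑ y, G y = 1)
    (hclose : ∀ S : Finset Y, Real.exp (-c) * ((∑ y ∈ S, D y) - γ) ≤ ∑ y ∈ S, G y) :
    ∃ e : Y → ℝ, (∀ y, 0 ≤ e y ∧ e y ≤ 1) ∧
      (∀ y, 0 < D y + G y →
        (1 / 2 * D y * e y) / (1 / 2 * D y + 1 / 2 * G y)
          ≤ Real.exp c / (1 + Real.exp c)) ∧
      1 - γ ≤ ∑ y, D y * e y ∧ 1 - γ ≤ ∑ y, G y * e y :=
  stmt_14_general c γ hc D G hD0 hG0 hD1 hG1 hclose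
end
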